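/- arXiv:1804.11215 — 4 statements merged into one kernel-verified Lean document; each statement's English description precedes it below -/
import Mathlib

section
/- Let n ≥ 1, r > 0, R > 0, M > 0, and let t_1,…,t_n, s_1,…,s_n ∈ ℂ with |t_i| ≤ R and |t_i − s_i| ≤ r ≤ M for all i. Let e_k denote the k-th elementary symmetric polynomial in n variables. Then for each k ∈ {1,…,n}, |e_k(t_1,…,t_n) − e_k(s_1,…,s_n)| ≤ D_k·r, where D_k = C(n,k)·(R^(k−1) + (M+R)·C_{k−1}), C_1 = 1, C_j = R^(j−1) + (M+R)·C_{j−1}, and D_1 = n. -/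
/-! Peeling one factor off a product, `∏ t - ∏ s = (tᵢ - sᵢ) ∏' t + sᵢ (∏' t - ∏' s)` with
`‖sᵢ‖ ≤ M + R`, bounds the difference of two products of `k` factors by `C k * r`. Since
`D k = C(n, k) * C k`, summing over the `C(n, k)` subsets of size `k` gives the claim. -/

open Finset

section ProductPerturbation

variable {ι α : Type*} [NormedCommRing α] {t s : ι → α} {R R' r : ℝ}

theorem Finset.norm_prod_le_pow_card {A : Finset ι} (hA : A.Nonempty) (ht : ∀ i, ‖t i‖ ≤ R) :
    ‖∏ i ∈ A, t i‖ ≤ R ^ #A :=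
  calc ‖∏ i ∈ A, t i‖ ≤ ∏ i ∈ A, ‖t i‖ := A.norm_prod_le' hA t
    _ ≤ ∏ _i ∈ A, R := prod_le_prod (fun _ _ => norm_nonneg _) fun i _ => ht i
    _ = R ^ #A := prod_const R

theorem Finset.norm_prod_sub_prod_le {c : ℕ → ℝ} (hc1 : c 1 = 1)
    (hc : ∀ k, 1 ≤ k → c (k + 1) = R ^ k + R' * c k)
    (ht : ∀ i, ‖t i‖ ≤ R) (hs : ∀ i, ‖s i‖ ≤ R') (hts : ∀ i, ‖t i - s i‖ ≤ r)
    {A : Finset ι} (hA : A.Nonempty) :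
    ‖∏ i ∈ A, t i - ∏ i ∈ A, s i‖ ≤ c #A * r := by
  induction hA using Finset.Nonempty.cons_induction with
  | singleton i => simpa [hc1] using hts i
  | cons i A hi hA ih =>
    have hr : 0 ≤ r := (norm_nonneg _).trans (hts i)
    have hR' : 0 ≤ R' := (norm_nonneg _).trans (hs i)
    have peel : ∏ j ∈ A.cons i hi, t j - ∏ j ∈ A.cons i hi, s j =
        (t i - s i) * ∏ j ∈ A, t j + s i * (∏ j ∈ A, t j - ∏ j ∈ A, s j) := by
      rw [prod_cons, prod_cons]; ring
    calc ‖∏ j ∈ A.cons i hi, t j - ∏ j ∈ A.cons i hi, s j‖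
        ≤ ‖t i - s i‖ * ‖∏ j ∈ A, t j‖ + ‖s i‖ * ‖∏ j ∈ A, t j - ∏ j ∈ A, s j‖ := by
          rw [peel]
          exact (norm_add_le _ _).trans (add_le_add (norm_mul_le _ _) (norm_mul_le _ _))
      _ ≤ r * R ^ #A + R' * (c #A * r) := by
          gcongr
          exacts [hts i, A.norm_prod_le_pow_card hA ht, hs i]
      _ = c #(A.cons i hi) * r := by
          rw [card_cons, hc _ hA.card_pos]; ring

end ProductPerturbation

theorem norm_sum_powersetCard_sub_le {ι α : Type*} [Fintype ι] [SeminormedAddCommGroup α]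
    {f g : Finset ι → α} {k : ℕ} {b : ℝ} (hfg : ∀ A : Finset ι, #A = k → ‖f A - g A‖ ≤ b) :
    ‖∑ A ∈ univ.powersetCard k, f A - ∑ A ∈ univ.powersetCard k, g A‖ ≤
      (Fintype.card ι).choose k * b :=
  calc ‖∑ A ∈ univ.powersetCard k, f A - ∑ A ∈ univ.powersetCard k, g A‖
      ≤ ∑ A ∈ univ.powersetCard k, ‖f A - g A‖ := by
        rw [← sum_sub_distrib]; exact norm_sum_le _ _
    _ ≤ ∑ _A ∈ univ.powersetCard k, b :=
        sum_le_sum fun A hA => hfg A (mem_powersetCard.mp hA).2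
    _ = (Fintype.card ι).choose k * b := by
        rw [sum_const, card_powersetCard, card_univ, nsmul_eq_mul]

theorem esymm_difference_bound_general (n : ℕ) (r R M : ℝ)
    (hrM : r ≤ M)
    (t s : Fin n → ℂ) (ht : ∀ i, ‖t i‖ ≤ R)
    (hts : ∀ i, ‖t i - s i‖ ≤ r)
    (C : ℕ → ℝ) (hC1 : C 1 = 1)
    (hCj : ∀ j, 2 ≤ j → C j = R ^ (j - 1) + (M + R) * C (j - 1))
    (D : ℕ → ℝ) (hD1 : D 1 = n)
    (hDk : ∀ k, 2 ≤ k → D k = (n.choose k : ℝ) * (R ^ (k - 1) + (M + R) * C (k - 1))) :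
    ∀ k : ℕ, 1 ≤ k → k ≤ n →
      ‖(∑ A ∈ Finset.univ.powersetCard k, ∏ i ∈ A, t i) -
          ∑ A ∈ Finset.univ.powersetCard k, ∏ i ∈ A, s i‖ ≤ D k * r := by
  intro k hk _
  have hs : ∀ i, ‖s i‖ ≤ M + R := fun i =>
    calc ‖s i‖ ≤ ‖t i‖ + ‖t i - s i‖ := norm_le_norm_add_norm_sub (t i) (s i)
      _ ≤ M + R := by linarith [hts i, ht i]
  have hC : ∀ j, 1 ≤ j → C (j + 1) = R ^ j + (M + R) * C j := fun j hj => by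
    simpa using hCj (j + 1) (by omega)
  have hD : D k = n.choose k * C k := by
    rcases hk.eq_or_lt with rfl | hk2
    · simp [hD1, hC1]
    · rw [hDk k hk2, hCj k hk2]
  have hprod (A : Finset (Fin n)) (hA : #A = k) : ‖∏ i ∈ A, t i - ∏ i ∈ A, s i‖ ≤ C k * r :=
    hA ▸ norm_prod_sub_prod_le hC1 hC ht hs hts (card_pos.mp (by omega))
  rw [hD, mul_assoc]
  exact (norm_sum_powersetCard_sub_le hprod).trans_eq (by rw [Fintype.card_fin])

theorem esymm_difference_bound (n : ℕ) (hn : 1 ≤ n) (r R M : ℝ)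
    (hr : 0 < r) (hR : 0 < R) (hM : 0 < M) (hrM : r ≤ M)
    (t s : Fin n → ℂ) (ht : ∀ i, ‖t i‖ ≤ R)
    (hts : ∀ i, ‖t i - s i‖ ≤ r)
    (C : ℕ → ℝ) (hC1 : C 1 = 1)
    (hCj : ∀ j, 2 ≤ j → C j = R ^ (j - 1) + (M + R) * C (j - 1))
    (D : ℕ → ℝ) (hD1 : D 1 = n)
    (hDk : ∀ k, 2 ≤ k → D k = (n.choose k : ℝ) * (R ^ (k - 1) + (M + R) * C (k - 1))) :
    ∀ k : ℕ, 1 ≤ k → k ≤ n →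
      ‖(∑ A ∈ Finset.univ.powersetCard k, ∏ i ∈ A, t i) -
          ∑ A ∈ Finset.univ.powersetCard k, ∏ i ∈ A, s i‖ ≤ D k * r :=
  esymm_difference_bound_general n r R M hrM t s ht hts C hC1 hCj D hD1 hDk
end

section
/- There exist a continuous function f : [0,1] → ℝ and continuous functions f_k : [0,1] → ℝ (k ≥ 1) such that d_H(graph(f_k), graph(f)) ≤ 1/2^k for all k, yet ‖f − f_k‖_∞ = 1/(2k²) for all k; in particular limsup_k (d_H(graph(f_k), graph(f)))^(1/k) < 1 while limsup_k (‖f − f_k‖_∞)^(1/k) = 1. -/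
/-!
`f` is a sum of tent-shaped bumps with disjoint supports, the `k`-th of height `1 / (2 k²)`
living on `(2⁻ᵏ, 2¹⁻ᵏ)`; on `[0, 2¹⁻ᵏ]` it is therefore bounded by `1 / (2 k²)`. Take
`F k = f ∘ S` for a continuous surjection `S` of `[0, 1]` that is the identity beyond `2¹⁻ᵏ`,
maps `[0, 2¹⁻ᵏ]` into itself, moves no point by more than `2⁻ᵏ` and pushes the peak of the
`k`-th bump onto the zero of `f` at `2¹⁻ᵏ`. Reparametrising the domain moves the graph by at most
the displacement, so the Hausdorff distance is at most `2⁻ᵏ`, whereas the uniform distance is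
exactly the height of the `k`-th bump, whose `k`-th root tends to `1`.
-/

open Metric Set Filter Topology

noncomputable section

def hat (t : ℝ) : ℝ := max 0 (1 - |t|)

lemma hat_nonneg (t : ℝ) : 0 ≤ hat t := le_max_left _ _

lemma hat_le_one (t : ℝ) : hat t ≤ 1 := max_le zero_le_one (by linarith [abs_nonneg t])

lemma hat_zero : hat 0 = 1 := by simp [hat]

lemma hat_eq_zero_of_one_le_abs {t : ℝ} (h : 1 ≤ |t|) : hat t = 0 :=
  max_eq_left (by linarith)

lemma abs_lt_one_of_hat_ne_zero {t : ℝ} (h : hat t ≠ 0) : |t| < 1 := by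
  contrapose! h
  exact hat_eq_zero_of_one_le_abs h

lemma continuous_hat : Continuous hat := continuous_const.max (by fun_prop)

-- Supported in `(2⁻ʲ, 2¹⁻ʲ)`, with its peak `a j` at `3 / 2 ^ (j + 1)`.
def bump (a : ℕ → ℝ) (j : ℕ) (x : ℝ) : ℝ := a j * hat (2 ^ (j + 1) * x - 3)

def bumpSeries (a : ℕ → ℝ) (x : ℝ) : ℝ := ∑' j, bump a j x

section Bumps

variable {a : ℕ → ℝ} {j k : ℕ} {x : ℝ}

lemma two_pow_mul_mem_Ioo_of_bump_ne_zero (h : bump a j x ≠ 0) : 2 ^ j * x ∈ Ioo (1 : ℝ) 2 := by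
  have h3 := abs_lt.1 (abs_lt_one_of_hat_ne_zero (right_ne_zero_of_mul h))
  rw [pow_succ] at h3
  constructor <;> linarith

lemma two_mul_two_pow_mul_le (hx : 0 ≤ x) (h : j < k) : 2 * (2 ^ j * x) ≤ 2 ^ k * x := by
  rw [← mul_assoc, ← pow_succ']
  exact mul_le_mul_of_nonneg_right (pow_le_pow_right₀ one_le_two h) hx

lemma eq_of_bump_ne_zero (h : bump a j x ≠ 0) (hk : 2 ^ k * x ∈ Icc (1 : ℝ) 2) : j = k := by
  have hj := two_pow_mul_mem_Ioo_of_bump_ne_zero h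
  have hx : 0 ≤ x := (pos_of_mul_pos_right (one_pos.trans hj.1) (by positivity)).le
  rcases lt_trichotomy j k with hjk | rfl | hkj
  · linarith [two_mul_two_pow_mul_le hx hjk, hj.1, hk.2]
  · rfl
  · linarith [two_mul_two_pow_mul_le hx hkj, hj.2, hk.1]

lemma bumpSeries_eq_bump (h : ∀ j, bump a j x ≠ 0 → j = k) : bumpSeries a x = bump a k x :=
  tsum_eq_single k fun j hj => by_contra fun hne => hj (h j hne)

lemma bumpSeries_eq_bump_of_mem_Icc (hk : 2 ^ k * x ∈ Icc (1 : ℝ) 2) :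
    bumpSeries a x = bump a k x :=
  bumpSeries_eq_bump fun _ hj => eq_of_bump_ne_zero hj hk

lemma bumpSeries_three_div_two_pow : bumpSeries a (3 / 2 ^ (k + 1)) = a k := by
  have hk : (2 : ℝ) ^ k * (3 / 2 ^ (k + 1)) = 3 / 2 := by field_simp; ring
  rw [bumpSeries_eq_bump_of_mem_Icc (by rw [hk]; norm_num), bump,
    mul_div_cancel₀ _ (by positivity), sub_self, hat_zero, mul_one]

lemma bumpSeries_two_div_two_pow : bumpSeries a (2 / 2 ^ k) = 0 := by
  have hk : (2 : ℝ) ^ k * (2 / 2 ^ k) = 2 := by field_simp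
  rw [bumpSeries_eq_bump_of_mem_Icc (by rw [hk]; norm_num), bump, hat_eq_zero_of_one_le_abs,
    mul_zero]
  rw [pow_succ, mul_comm _ (2 : ℝ), mul_assoc, hk]
  norm_num

variable (ha : ∀ j, 0 ≤ a j)
include ha

lemma bump_le (j : ℕ) (x : ℝ) : bump a j x ≤ a j :=
  mul_le_of_le_one_right (ha j) (hat_le_one _)

lemma bump_nonneg (j : ℕ) (x : ℝ) : 0 ≤ bump a j x := mul_nonneg (ha j) (hat_nonneg _)

lemma bumpSeries_nonneg (x : ℝ) : 0 ≤ bumpSeries a x := tsum_nonneg fun j => bump_nonneg ha j x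

lemma continuous_bumpSeries (hs : Summable a) : Continuous (bumpSeries a) := by
  refine continuous_tsum (fun j => continuous_const.mul (continuous_hat.comp (by fun_prop))) hs
    fun j x => ?_
  rw [Real.norm_eq_abs, abs_of_nonneg (bump_nonneg ha j x)]
  exact bump_le ha j x

lemma bumpSeries_le (hanti : AntitoneOn a (Ici 1)) (hk : 1 ≤ k) (hx : x ≤ 2 / 2 ^ k) :
    bumpSeries a x ≤ a k := by
  by_cases h : ∃ j, bump a j x ≠ 0
  · obtain ⟨j, hj⟩ := h
    have hjx := two_pow_mul_mem_Ioo_of_bump_ne_zero hj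
    have hx0 : 0 ≤ x := (pos_of_mul_pos_right (one_pos.trans hjx.1) (by positivity)).le
    have hkx : 2 ^ k * x ≤ 2 := by rwa [le_div_iff₀' (by positivity)] at hx
    have hkj : k ≤ j := by
      by_contra! hjk
      linarith [two_mul_two_pow_mul_le hx0 hjk, hjx.1]
    rw [bumpSeries_eq_bump fun i hi => eq_of_bump_ne_zero hi (Ioo_subset_Icc_self hjx)]
    exact (bump_le ha j x).trans (hanti hk (hk.trans hkj) hkj)
  · push Not at h
    simpa [bumpSeries, h] using ha k

end Bumps

def stretch (b x : ℝ) : ℝ := max x (min (2 * x) b)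

section Stretch

variable {b x : ℝ}

lemma le_stretch : x ≤ stretch b x := le_max_left _ _

lemma stretch_le_add (hb : 0 ≤ b) : stretch b x ≤ x + b / 2 := by
  refine max_le (by linarith) ?_
  rcases le_total x (b / 2) with h | h
  · exact (min_le_left _ _).trans (by linarith)
  · exact (min_le_right _ _).trans (by linarith)

lemma stretch_le (h : x ≤ b) : stretch b x ≤ b := max_le h (min_le_right _ _)

lemma stretch_eq_self (h : b ≤ x) : stretch b x = x := max_eq_left ((min_le_right _ _).trans h)

lemma stretch_zero (hb : 0 ≤ b) : stretch b 0 = 0 := by simp [stretch, hb]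

lemma stretch_three_mul_div_four (hb : 0 ≤ b) : stretch b (3 * b / 4) = b := by
  rw [stretch, min_eq_right (by linarith), max_eq_right (by linarith)]

lemma continuous_stretch : Continuous (stretch b) := by unfold stretch; fun_prop

lemma mapsTo_stretch (hb : b ≤ 1) : MapsTo (stretch b) (Icc 0 1) (Icc 0 1) := fun _ hx =>
  ⟨hx.1.trans le_stretch, max_le hx.2 ((min_le_right _ _).trans hb)⟩

lemma surjOn_stretch (hb₀ : 0 ≤ b) (hb₁ : b ≤ 1) : SurjOn (stretch b) (Icc 0 1) (Icc 0 1) := by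
  have := intermediate_value_Icc zero_le_one (continuous_stretch (b := b)).continuousOn
  rwa [stretch_zero hb₀, stretch_eq_self hb₁] at this

end Stretch

theorem hausdorffDist_graph_comp_le {α β : Type*} [PseudoMetricSpace α] [PseudoMetricSpace β]
    {s : Set α} {f : α → β} {S : α → α} {δ : ℝ} (hδ : 0 ≤ δ) (hmaps : MapsTo S s s)
    (hsurj : SurjOn S s s) (hdist : ∀ x ∈ s, dist x (S x) ≤ δ) :
    hausdorffDist {p : α × β | p.1 ∈ s ∧ p.2 = f (S p.1)} {p | p.1 ∈ s ∧ p.2 = f p.1} ≤ δ := by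
  apply hausdorffDist_le_of_mem_dist hδ
  · rintro ⟨x, y⟩ ⟨hx, hy⟩
    dsimp only at hx hy
    subst hy
    exact ⟨(S x, f (S x)), ⟨hmaps hx, rfl⟩, by simpa [Prod.dist_eq, hδ] using hdist x hx⟩
  · rintro ⟨y, z⟩ ⟨hy, hz⟩
    dsimp only at hy hz
    subst hz
    obtain ⟨x, hx, rfl⟩ := hsurj hy
    exact ⟨(x, f (S x)), ⟨hx, rfl⟩, by simpa [Prod.dist_eq, dist_comm, hδ] using hdist x hx⟩

lemma two_div_two_pow_le_one {k : ℕ} (hk : 1 ≤ k) : (2 : ℝ) / 2 ^ k ≤ 1 :=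
  (div_le_one (by positivity)).2 (le_self_pow₀ one_le_two (by omega))

theorem hausdorffDist_graph_comp_stretch_le (f : ℝ → ℝ) {k : ℕ} (hk : 1 ≤ k) :
    hausdorffDist {p : ℝ × ℝ | p.1 ∈ Icc 0 1 ∧ p.2 = f (stretch (2 / 2 ^ k) p.1)}
      {p | p.1 ∈ Icc 0 1 ∧ p.2 = f p.1} ≤ 1 / 2 ^ k := by
  have hb₀ : (0 : ℝ) ≤ 2 / 2 ^ k := by positivity
  refine hausdorffDist_graph_comp_le (by positivity) (mapsTo_stretch (two_div_two_pow_le_one hk))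
    (surjOn_stretch hb₀ (two_div_two_pow_le_one hk)) fun x _ => ?_
  rw [Real.dist_eq, abs_sub_comm, abs_of_nonneg (sub_nonneg.2 le_stretch)]
  linarith [stretch_le_add (x := x) hb₀, show (2 : ℝ) / 2 ^ k / 2 = 1 / 2 ^ k by ring]

theorem iSup_abs_bumpSeries_sub_stretch {a : ℕ → ℝ} (ha : ∀ j, 0 ≤ a j)
    (hanti : AntitoneOn a (Ici 1)) {k : ℕ} (hk : 1 ≤ k) :
    (⨆ x : Icc (0 : ℝ) 1, |bumpSeries a x - bumpSeries a (stretch (2 / 2 ^ k) x)|) = a k := by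
  set b : ℝ := 2 / 2 ^ k
  have hb₀ : 0 ≤ b := by positivity
  have hle : ∀ x ∈ Icc (0 : ℝ) 1, |bumpSeries a x - bumpSeries a (stretch b x)| ≤ a k := by
    intro x hx
    rcases le_total x b with hxb | hbx
    · exact abs_sub_le_of_nonneg_of_le (bumpSeries_nonneg ha x) (bumpSeries_le ha hanti hk hxb)
        (bumpSeries_nonneg ha _) (bumpSeries_le ha hanti hk (stretch_le hxb))
    · simpa [stretch_eq_self hbx] using ha k
  -- the bump of height `a k` sits at `3 b / 4`, which the stretch moves to the zero at `b`
  have hpeak : (3 : ℝ) / 2 ^ (k + 1) = 3 * b / 4 := by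
    simp only [b, pow_succ]; field_simp; ring
  have hpeak_mem : 3 * b / 4 ∈ Icc (0 : ℝ) 1 :=
    ⟨by positivity, by linarith [two_div_two_pow_le_one hk]⟩
  refine le_antisymm (ciSup_le fun x => hle x x.2) ?_
  refine le_ciSup_of_le ⟨a k, forall_mem_range.2 fun x => hle x x.2⟩ ⟨_, hpeak_mem⟩ ?_
  show a k ≤ |bumpSeries a (3 * b / 4) - bumpSeries a (stretch b (3 * b / 4))|
  rw [stretch_three_mul_div_four hb₀, ← hpeak, bumpSeries_three_div_two_pow,
    bumpSeries_two_div_two_pow, sub_zero, abs_of_nonneg (ha k)]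

lemma limsup_rpow_one_div_le {u : ℕ → ℝ} {r : ℝ} (hu : ∀ k, 0 ≤ u k) (hr : 0 ≤ r)
    (h : ∀ᶠ k in atTop, u k ≤ r ^ k) : limsup (fun k : ℕ => u k ^ ((1 : ℝ) / k)) atTop ≤ r := by
  refine limsup_le_of_le (isCoboundedUnder_le_of_le atTop fun k => Real.rpow_nonneg (hu k) _) ?_
  filter_upwards [h, eventually_ne_atTop 0] with k hk hk0
  calc u k ^ ((1 : ℝ) / k) ≤ (r ^ k) ^ ((1 : ℝ) / k) := by gcongr; exact hu k
    _ = r := by rw [one_div, Real.pow_rpow_inv_natCast hr hk0]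

lemma tendsto_mul_natCast_pow_rpow_one_div {c : ℝ} (hc : 0 < c) (n : ℕ) :
    Tendsto (fun k : ℕ => (c * (k : ℝ) ^ n) ^ ((1 : ℝ) / k)) atTop (𝓝 1) := by
  have hc' : Tendsto (fun k : ℕ => c ^ ((1 : ℝ) / k)) atTop (𝓝 1) := by
    simpa using tendsto_const_nhds.rpow tendsto_one_div_atTop_nhds_zero_nat (Or.inl hc.ne')
  have hk : Tendsto (fun k : ℕ => (k : ℝ) ^ ((1 : ℝ) / k)) atTop (𝓝 1) :=
    tendsto_rpow_div.comp tendsto_natCast_atTop_atTop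
  simpa [Real.mul_rpow hc.le, Real.rpow_pow_comm, Nat.cast_nonneg] using hc'.mul (hk.pow n)

theorem hausdorff_graph_geometric_but_uniform_not
    : ∃ (f : ℝ → ℝ) (F : ℕ → ℝ → ℝ),
      ContinuousOn f (Set.Icc 0 1) ∧ (∀ k, ContinuousOn (F k) (Set.Icc 0 1)) ∧
      (∀ k : ℕ, 1 ≤ k →
        hausdorffDist
          {p : ℝ × ℝ | p.1 ∈ Set.Icc (0:ℝ) 1 ∧ p.2 = F k p.1}
          {p : ℝ × ℝ | p.1 ∈ Set.Icc (0:ℝ) 1 ∧ p.2 = f p.1} ≤ 1 / 2 ^ k) ∧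
      (∀ k : ℕ, 1 ≤ k →
        (⨆ x : Set.Icc (0:ℝ) 1, |f x - F k x|) = 1 / (2 * (k : ℝ) ^ 2)) ∧
      Filter.limsup (fun k : ℕ =>
        (hausdorffDist
          {p : ℝ × ℝ | p.1 ∈ Set.Icc (0:ℝ) 1 ∧ p.2 = F k p.1}
          {p : ℝ × ℝ | p.1 ∈ Set.Icc (0:ℝ) 1 ∧ p.2 = f p.1}) ^ ((1:ℝ)/k))
        Filter.atTop < 1 ∧
      Filter.limsup (fun k : ℕ =>
        (⨆ x : Set.Icc (0:ℝ) 1, |f x - F k x|) ^ ((1:ℝ)/k)) Filter.atTop = 1 := by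
  set a : ℕ → ℝ := fun k => 1 / (2 * (k : ℝ) ^ 2)
  have ha : ∀ k, 0 ≤ a k := fun k => by positivity
  have hanti : AntitoneOn a (Ici 1) := fun j (hj : 1 ≤ j) k _ hjk => by
    have : (1 : ℝ) ≤ j := by exact_mod_cast hj
    simp only [a]; gcongr
  have hs : Summable a :=
    ((Real.summable_one_div_nat_pow.2 one_lt_two).mul_left (1 / 2)).congr fun k => by
      simp only [a]; ring
  have hsup (k : ℕ) (hk : 1 ≤ k) := iSup_abs_bumpSeries_sub_stretch ha hanti hk
  have hHD (k : ℕ) (hk : 1 ≤ k) := hausdorffDist_graph_comp_stretch_le (bumpSeries a) hk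
  refine ⟨bumpSeries a, fun k x => bumpSeries a (stretch (2 / 2 ^ k) x),
    (continuous_bumpSeries ha hs).continuousOn,
    fun k => ((continuous_bumpSeries ha hs).comp continuous_stretch).continuousOn, hHD, hsup,
    ?_, ?_⟩
  · refine (limsup_rpow_one_div_le (fun _ => hausdorffDist_nonneg) one_half_pos.le ?_).trans_lt
      one_half_lt_one
    filter_upwards [eventually_ge_atTop 1] with k hk
    simpa [one_div_pow] using hHD k hk
  · refine Tendsto.limsup_eq ?_
    have hroot := (tendsto_mul_natCast_pow_rpow_one_div two_pos 2).inv₀ one_ne_zero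
    rw [inv_one] at hroot
    refine hroot.congr' ?_
    filter_upwards [eventually_ge_atTop 1] with k hk
    rw [hsup k hk, ← Real.inv_rpow (by positivity), ← one_div]

end
end

section
/- Let n ≥ 1 and let a = (a_1,…,a_n), b = (b_1,…,b_n) ∈ ℂ^n with max_i |a_i| ≤ C and max_i |b_i| ≤ C for some C > 1. Let ζ^a_1,…,ζ^a_n be the roots (with multiplicity) of P_a(t) = t^n + a_1 t^(n−1) + ⋯ + a_n and similarly for P_b. Then there exists a permutation σ of {1,…,n} such that |ζ^a_j − ζ^b_{σ(j)}| ≤ 4nC·(max_i |a_i − b_i|)^(1/n) for all j ∈ {1,…,n}. -/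
/-!
At a root `z` of `P_c`, where `c` is any coefficient vector with `‖c i‖ ≤ C` and
`‖a i - c i‖ ≤ ε`, we have `|z| ≤ 2C` and hence `∏ⱼ |z - ζᵃⱼ| = |P_a(z) - P_c(z)| ≤ (2C)ⁿ ε`,
so `z` lies within `d = 2C ε^(1/n)` of some root of `P_a`. Group the roots of `P_a` into
clusters, the connected components of the graph joining roots at distance `≤ 2d`. Along the
segment from `a` to `b` every root stays `d`-close to the roots of `P_a`, and by continuity of
the roots it cannot jump from one cluster to another. So at `b` the roots are matched with
those of `P_a` within clusters, and a cluster has diameter at most `2(n - 1)d`, giving the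
bound `(2n - 1)d ≤ 4nC ε^(1/n)`.
-/

open Finset

theorem exists_perm_of_map_univ_eq {ι α : Type*} [Fintype ι] {x y : ι → α}
    (h : univ.val.map x = univ.val.map y) : ∃ σ : Equiv.Perm ι, ∀ j, y (σ j) = x j := by
  classical
  have hfiber (v : α) : Fintype.card {j // x j = v} = Fintype.card {j // y j = v} := by
    simp only [Fintype.card_subtype, card_def, filter_val]
    simpa [Multiset.count_map, eq_comm] using congrArg (Multiset.count v) h
  exact ⟨Equiv.ofFiberEquiv fun v => Fintype.equivOfCardEq (hfiber v), Equiv.ofFiberEquiv_map _⟩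

open Polynomial in
theorem exists_perm_of_prod_sub_eq {ι K : Type*} [Fintype ι] [Field K] [Infinite K]
    {x y : ι → K} (h : ∀ t, ∏ j, (t - x j) = ∏ j, (t - y j)) :
    ∃ σ : Equiv.Perm ι, ∀ j, y (σ j) = x j := by
  apply exists_perm_of_map_univ_eq
  have hpoly : ∏ j, (X - C (x j)) = ∏ j, (X - C (y j)) :=
    Polynomial.funext fun t => by simpa [eval_prod] using h t
  have hroots (z : ι → K) : (∏ j, (X - C (z j))).roots = univ.val.map z := by
    rw [roots_prod _ _ (prod_ne_zero_iff.2 fun j _ => X_sub_C_ne_zero (z j))]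
    simp [Multiset.bind_singleton]
  rw [← hroots, ← hroots, hpoly]

theorem Multiset.exists_map_univ_eq_of_card_eq {α : Type*} {n : ℕ} {s : Multiset α}
    (hs : s.card = n) : ∃ f : Fin n → α, univ.val.map f = s := by
  obtain ⟨l, rfl⟩ : ∃ l : List α, (l : Multiset α) = s := Quot.exists_rep s
  rw [Multiset.coe_card] at hs
  subst hs
  exact ⟨l.get, by rw [Fin.univ_val_map, List.ofFn_get]⟩

theorem geom_sum_le_pow {R : ℝ} (hR : 2 ≤ R) (n : ℕ) : ∑ k ∈ range n, R ^ k ≤ R ^ n := by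
  have hgeom : (∑ k ∈ range n, R ^ k) * (R - 1) = R ^ n - 1 := geom_sum_mul R n
  have hsum : 0 ≤ ∑ k ∈ range n, R ^ k := sum_nonneg fun k _ => by positivity
  nlinarith

theorem exists_le_of_prod_le_pow {ι : Type*} [Fintype ι] [Nonempty ι] {f : ι → ℝ}
    (hf : ∀ i, 0 ≤ f i) {D : ℝ} (hD : 0 ≤ D) (h : ∏ i, f i ≤ D ^ Fintype.card ι) :
    ∃ i, f i ≤ D := by
  obtain ⟨i, hi⟩ := Finite.exists_min f
  refine ⟨i, (pow_le_pow_iff_left₀ (hf i) hD (Fintype.card_ne_zero (α := ι))).1 ?_⟩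
  calc f i ^ Fintype.card ι = ∏ _j, f i := by rw [prod_const, card_univ]
    _ ≤ ∏ j, f j := prod_le_prod (fun _ _ => hf i) fun j _ => hi j
    _ ≤ _ := h

section MonicPolynomial

variable {K : Type*} [NormedField K] {n : ℕ}

def monicEval (c : Fin n → K) (t : K) : K :=
  t ^ n + ∑ i : Fin n, c i * t ^ (n - 1 - (i : ℕ))

def IsRootTuple (c ζ : Fin n → K) : Prop :=
  ∀ t, monicEval c t = ∏ j, (t - ζ j)

theorem IsRootTuple.monicEval_eq_zero {c ζ : Fin n → K} (h : IsRootTuple c ζ) (j : Fin n) :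
    monicEval c (ζ j) = 0 := by
  rw [h]
  exact prod_eq_zero (mem_univ j) (sub_self _)

theorem IsRootTuple.exists_perm [Infinite K] {c ζ ζ' : Fin n → K} (h : IsRootTuple c ζ)
    (h' : IsRootTuple c ζ') : ∃ σ : Equiv.Perm (Fin n), ∀ j, ζ' (σ j) = ζ j :=
  exists_perm_of_prod_sub_eq fun t => (h t).symm.trans (h' t)

open Polynomial in
theorem exists_isRootTuple [IsAlgClosed K] (c : Fin n → K) : ∃ ζ, IsRootTuple c ζ := by
  set P : K[X] := X ^ n + ∑ i : Fin n, C (c i) * X ^ (n - 1 - (i : ℕ))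
  have hlow : (∑ i : Fin n, C (c i) * X ^ (n - 1 - (i : ℕ))).degree < (n : WithBot ℕ) := by
    refine (degree_sum_le _ _).trans_lt
      ((Finset.sup_lt_iff (WithBot.bot_lt_coe n)).2 fun i _ => ?_)
    exact (degree_C_mul_X_pow_le _ _).trans_lt (Nat.cast_lt.2 (by omega))
  have hmonic : P.Monic := monic_X_pow_add hlow
  have hdeg : P.natDegree = n := by
    rw [natDegree_add_eq_left_of_degree_lt (by rwa [degree_X_pow]), natDegree_X_pow]
  have hsplits : Splits P := IsAlgClosed.splits P
  obtain ⟨ζ, hζ⟩ := Multiset.exists_map_univ_eq_of_card_eq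
    ((splits_iff_card_roots.1 hsplits).trans hdeg)
  refine ⟨ζ, fun t => ?_⟩
  have := hsplits.eval_eq_prod_roots t
  rw [hmonic.leadingCoeff, one_mul, ← hζ, Multiset.map_map, ← prod_eq_multiset_prod] at this
  simpa [P, monicEval, eval_finsetSum] using this

theorem norm_sum_mul_pow_le {u : Fin n → K} {M : ℝ} (hu : ∀ i, ‖u i‖ ≤ M) (z : K) :
    ‖∑ i : Fin n, u i * z ^ (n - 1 - (i : ℕ))‖ ≤ M * ∑ k ∈ range n, ‖z‖ ^ k := calc
  _ ≤ ∑ i : Fin n, M * ‖z‖ ^ (n - 1 - (i : ℕ)) := by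
    refine (norm_sum_le _ _).trans (sum_le_sum fun i _ => ?_)
    rw [norm_mul, norm_pow]
    gcongr
    exact hu i
  _ = M * ∑ k ∈ range n, ‖z‖ ^ k := by
    rw [← mul_sum, Fin.sum_univ_eq_sum_range (fun k => ‖z‖ ^ (n - 1 - k)), sum_range_reflect]

theorem norm_le_of_monicEval_eq_zero {c : Fin n → K} {C : ℝ} (hC : 0 ≤ C)
    (hc : ∀ i, ‖c i‖ ≤ C) {z : K} (hz : monicEval c z = 0) : ‖z‖ ≤ C + 1 := by
  by_contra! hlt
  set r := ‖z‖
  have hpow : r ^ n ≤ C * ∑ k ∈ range n, r ^ k := by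
    have hzn : z ^ n = -∑ i : Fin n, c i * z ^ (n - 1 - (i : ℕ)) :=
      eq_neg_of_add_eq_zero_left hz
    calc r ^ n = ‖∑ i : Fin n, c i * z ^ (n - 1 - (i : ℕ))‖ := by rw [← norm_pow, hzn, norm_neg]
      _ ≤ _ := norm_sum_mul_pow_le hc z
  have hgeom : (∑ k ∈ range n, r ^ k) * (r - 1) = r ^ n - 1 := geom_sum_mul r n
  have hrn : 0 < r ^ n := pow_pos (by linarith) n
  nlinarith [mul_le_mul_of_nonneg_right hpow (by linarith : 0 ≤ r - 1)]

theorem IsRootTuple.norm_le {c ζ : Fin n → K} (h : IsRootTuple c ζ) : ‖ζ‖ ≤ ‖c‖ + 1 :=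
  (pi_norm_le_iff_of_nonneg (by positivity)).2 fun j =>
    norm_le_of_monicEval_eq_zero (norm_nonneg c) (norm_le_pi_norm c) (h.monicEval_eq_zero j)

theorem IsRootTuple.exists_dist_le {a c ζ : Fin n → K} (hζ : IsRootTuple a ζ) (hn : n ≠ 0)
    {C ε : ℝ} (hC : 1 ≤ C) (hc : ∀ i, ‖c i‖ ≤ C) (hac : ∀ i, ‖a i - c i‖ ≤ ε)
    {z : K} (hz : monicEval c z = 0) :
    ∃ j, dist z (ζ j) ≤ 2 * C * ε ^ ((1 : ℝ) / n) := by
  have hε : 0 ≤ ε := (norm_nonneg _).trans (hac ⟨0, Nat.pos_of_ne_zero hn⟩)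
  have hz2C : ‖z‖ ≤ 2 * C := by linarith [norm_le_of_monicEval_eq_zero (by linarith) hc hz]
  have hprod : ∏ j, dist z (ζ j) ≤ ε * (2 * C) ^ n := calc
    ∏ j, dist z (ζ j) = ‖monicEval a z - monicEval c z‖ := by
      simp only [dist_eq_norm]; rw [hz, sub_zero, hζ, norm_prod]
    _ = ‖∑ i : Fin n, (a i - c i) * z ^ (n - 1 - (i : ℕ))‖ := by
      simp only [monicEval, add_sub_add_left_eq_sub, ← sum_sub_distrib, sub_mul]
    _ ≤ ε * ∑ k ∈ range n, ‖z‖ ^ k := norm_sum_mul_pow_le hac z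
    _ ≤ ε * ∑ k ∈ range n, (2 * C) ^ k := by gcongr
    _ ≤ ε * (2 * C) ^ n := by gcongr; exact geom_sum_le_pow (by linarith) n
  have : NeZero n := ⟨hn⟩
  refine exists_le_of_prod_le_pow (fun j => dist_nonneg) (by positivity) ?_
  rw [Fintype.card_fin, mul_pow, ← Real.rpow_natCast (ε ^ _), ← Real.rpow_mul hε,
    one_div_mul_cancel (by exact_mod_cast hn), Real.rpow_one, mul_comm]
  exact hprod

theorem isClosed_setOf_isRootTuple :
    IsClosed {x : (Fin n → K) × (Fin n → K) | IsRootTuple x.1 x.2} := by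
  simp only [IsRootTuple, monicEval, Set.ofPred_forall]
  exact isClosed_iInter fun t => isClosed_eq (by fun_prop) (by fun_prop)

open Metric Topology in
/-- Continuity of the roots: the pairs `(c, q)` near `c₀` with `q` far from every reordering
of `p` form a compact set whose projection misses `c₀`. -/
theorem IsRootTuple.eventually_exists_perm_dist_lt [Infinite K] [ProperSpace K]
    {c₀ p : Fin n → K} (hp : IsRootTuple c₀ p) {r : ℝ} (hr : 0 < r) :
    ∀ᶠ c in 𝓝 c₀, ∀ q, IsRootTuple c q →
      ∃ τ : Equiv.Perm (Fin n), ∀ j, dist (p j) (q (τ j)) < r := by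
  set B := {x : (Fin n → K) × (Fin n → K) | x.1 ∈ closedBall c₀ 1 ∧ IsRootTuple x.1 x.2 ∧
    ∀ τ : Equiv.Perm (Fin n), ∃ j, r ≤ dist (p j) (x.2 (τ j))}
  have hfar : IsClosed {x : (Fin n → K) × (Fin n → K) |
      ∀ τ : Equiv.Perm (Fin n), ∃ j, r ≤ dist (p j) (x.2 (τ j))} := by
    simp only [Set.ofPred_forall, Set.ofPred_exists]
    exact isClosed_iInter fun τ => isClosed_iUnion_of_finite fun j =>
      isClosed_le continuous_const (by fun_prop)
  have hclosed : IsClosed B :=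
    (isClosed_closedBall.preimage continuous_fst).inter (isClosed_setOf_isRootTuple.inter hfar)
  have hbounded : Bornology.IsBounded B := by
    refine ((isBounded_closedBall (x := c₀) (r := 1)).prod
      (isBounded_closedBall (x := 0) (r := ‖c₀‖ + 2))).subset ?_
    rintro ⟨c, q⟩ ⟨hc, hq, -⟩
    refine ⟨hc, mem_closedBall_zero_iff.2 (hq.norm_le.trans ?_)⟩
    linarith [norm_le_norm_add_const_of_dist_le (Metric.mem_closedBall.1 hc)]
  have hc₀ : c₀ ∉ Prod.fst '' B := by
    rintro ⟨⟨c, q⟩, ⟨-, hq, hfar⟩, rfl⟩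
    obtain ⟨τ, hτ⟩ := hp.exists_perm hq
    obtain ⟨j, hj⟩ := hfar τ
    rw [hτ, dist_self] at hj
    linarith
  have hcompact : IsCompact (Prod.fst '' B) :=
    (isCompact_of_isClosed_isBounded hclosed hbounded).image continuous_fst
  filter_upwards [hcompact.isClosed.isOpen_compl.mem_nhds hc₀, closedBall_mem_nhds c₀ one_pos]
    with c hcB hc q hq
  by_contra! hfar
  exact hcB ⟨(c, q), ⟨hc, hq, hfar⟩, rfl⟩

end MonicPolynomial

section ClusterMatching

variable {ι α : Type*} [PseudoMetricSpace α]

def closeGraph (ζ : ι → α) (R : ℝ) : SimpleGraph ι where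
  Adj j k := j ≠ k ∧ dist (ζ j) (ζ k) ≤ R
  symm := ⟨fun j k h => ⟨h.1.symm, dist_comm (ζ j) (ζ k) ▸ h.2⟩⟩
  loopless := ⟨fun _ h => h.1 rfl⟩

theorem closeGraph.dist_le_of_walk {ζ : ι → α} {R : ℝ} {j k : ι}
    (w : (closeGraph ζ R).Walk j k) : dist (ζ j) (ζ k) ≤ w.length * R := by
  induction w with
  | nil => simp
  | @cons j l k hadj w ih =>
    rw [SimpleGraph.Walk.length_cons, Nat.cast_succ]
    linarith [dist_triangle (ζ j) (ζ l) (ζ k), hadj.2]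

theorem closeGraph.dist_le_of_reachable [Fintype ι] {ζ : ι → α} {R : ℝ} (hR : 0 ≤ R) {j k : ι}
    (h : (closeGraph ζ R).Reachable j k) : dist (ζ j) (ζ k) ≤ (Fintype.card ι - 1) * R := by
  classical
  obtain ⟨w⟩ := h
  have hlen : (w.toPath.1.length : ℝ) ≤ Fintype.card ι - 1 := by
    rw [le_sub_iff_add_le]
    exact_mod_cast w.toPath.2.length_lt
  calc dist (ζ j) (ζ k) ≤ w.toPath.1.length * R := dist_le_of_walk _
    _ ≤ (Fintype.card ι - 1) * R := by gcongr

open Filter Topology in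
theorem closeGraph.exists_pos_reachable_of_dist_lt [Finite ι] (ζ : ι → α) (R : ℝ) :
    ∃ γ > 0, ∀ j k, dist (ζ j) (ζ k) < R + γ → (closeGraph ζ R).Reachable j k := by
  have hpair (j k : ι) :
      ∀ᶠ γ in 𝓝[>] (0 : ℝ), dist (ζ j) (ζ k) < R + γ → (closeGraph ζ R).Reachable j k := by
    by_cases hjk : (closeGraph ζ R).Reachable j k
    · exact Eventually.of_forall fun _ _ => hjk
    have hfar : R < dist (ζ j) (ζ k) := by
      by_contra! hle
      obtain rfl | hne := eq_or_ne j k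
      · exact hjk (SimpleGraph.Reachable.refl j)
      · exact hjk (SimpleGraph.Adj.reachable ⟨hne, hle⟩)
    filter_upwards [nhdsWithin_le_nhds (eventually_lt_nhds (sub_pos.2 hfar))] with γ hγ h
    linarith
  simp only [← eventually_all] at hpair
  obtain ⟨γ, hγ, hγpos⟩ := (hpair.and self_mem_nhdsWithin).exists
  exact ⟨γ, hγpos, hγ⟩

def ClusterMatched (ζ : ι → α) (d : ℝ) (q : ι → α) : Prop :=
  ∃ σ : Equiv.Perm ι, ∀ j, ∃ k, (closeGraph ζ (2 * d)).Reachable j k ∧ dist (q (σ j)) (ζ k) ≤ d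

theorem clusterMatched_self (ζ : ι → α) {d : ℝ} (hd : 0 ≤ d) : ClusterMatched ζ d ζ :=
  ⟨1, fun j => ⟨j, SimpleGraph.Reachable.refl j, by simpa using hd⟩⟩

theorem ClusterMatched.of_dist_lt {ζ q q' : ι → α} {d γ : ℝ} (hq : ClusterMatched ζ d q)
    (hgap : ∀ k m, dist (ζ k) (ζ m) < 2 * d + γ → (closeGraph ζ (2 * d)).Reachable k m)
    (hq' : ∀ j, ∃ k, dist (q' j) (ζ k) ≤ d) (τ : Equiv.Perm ι)
    (hτ : ∀ j, dist (q j) (q' (τ j)) < γ) : ClusterMatched ζ d q' := by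
  obtain ⟨σ, hσ⟩ := hq
  refine ⟨σ.trans τ, fun j => ?_⟩
  obtain ⟨k, hjk, hk⟩ := hσ j
  obtain ⟨m, hm⟩ := hq' (τ (σ j))
  refine ⟨m, hjk.trans (hgap k m ?_), hm⟩
  have := dist_triangle4 (ζ k) (q (σ j)) (q' (τ (σ j))) (ζ m)
  rw [dist_comm] at hk
  linarith [hτ (σ j)]

theorem ClusterMatched.exists_perm_dist_le [Fintype ι] {ζ q : ι → α} {d : ℝ}
    (h : ClusterMatched ζ d q) (hd : 0 ≤ d) :
    ∃ σ : Equiv.Perm ι, ∀ j, dist (ζ j) (q (σ j)) ≤ (2 * Fintype.card ι - 1) * d := by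
  obtain ⟨σ, hσ⟩ := h
  refine ⟨σ, fun j => ?_⟩
  obtain ⟨k, hjk, hk⟩ := hσ j
  have := closeGraph.dist_le_of_reachable (by positivity) hjk
  linarith [dist_triangle_right (ζ j) (q (σ j)) (ζ k)]

end ClusterMatching

theorem exists_perm_dist_le_of_continuous {K : Type*} [NormedField K] [IsAlgClosed K]
    [ProperSpace K] {n : ℕ} {X : Type*} [TopologicalSpace X] [PreconnectedSpace X]
    {c : X → Fin n → K} (hc : Continuous c) {x₀ x₁ : X} {ζ q : Fin n → K}
    (hζ : IsRootTuple (c x₀) ζ) (hq : IsRootTuple (c x₁) q) {d : ℝ} (hd : 0 ≤ d)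
    (hclose : ∀ x z, monicEval (c x) z = 0 → ∃ k, dist z (ζ k) ≤ d) :
    ∃ σ : Equiv.Perm (Fin n), ∀ j, dist (ζ j) (q (σ j)) ≤ (2 * n - 1) * d := by
  obtain ⟨γ, hγ, hgap⟩ := closeGraph.exists_pos_reachable_of_dist_lt ζ (2 * d)
  have hnear {x : X} {p : Fin n → K} (hp : IsRootTuple (c x) p) j : ∃ k, dist (p j) (ζ k) ≤ d :=
    hclose x _ (hp.monicEval_eq_zero j)
  have hreorder {x : X} {p p' : Fin n → K} (hp : IsRootTuple (c x) p)
      (hp' : IsRootTuple (c x) p') (hm : ClusterMatched ζ d p) : ClusterMatched ζ d p' := by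
    obtain ⟨τ, hτ⟩ := hp.exists_perm hp'
    exact hm.of_dist_lt hgap (hnear hp') τ fun j => by rwa [hτ, dist_self]
  let Matched (x : X) : Prop := ∃ p, IsRootTuple (c x) p ∧ ClusterMatched ζ d p
  have hlocal : IsLocallyConstant Matched := by
    refine (IsLocallyConstant.iff_eventually_eq Matched).2 fun x => ?_
    obtain ⟨p, hp⟩ := exists_isRootTuple (c x)
    filter_upwards [hc.continuousAt.eventually (hp.eventually_exists_perm_dist_lt hγ)] with y hy
    obtain ⟨p', hp'⟩ := exists_isRootTuple (c y)
    obtain ⟨τ, hτ⟩ := hy p' hp'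
    refine propext ⟨fun ⟨r, hr, hm⟩ => ⟨p, hp, ?_⟩, fun ⟨r, hr, hm⟩ => ⟨p', hp', ?_⟩⟩
    · refine (hreorder hr hp' hm).of_dist_lt hgap (hnear hp) τ.symm fun j => ?_
      simpa [dist_comm] using hτ (τ.symm j)
    · exact (hreorder hr hp hm).of_dist_lt hgap (hnear hp') τ hτ
  obtain ⟨p, hp, hm⟩ : Matched x₁ :=
    hlocal.apply_eq_of_preconnectedSpace x₀ x₁ ▸ ⟨ζ, hζ, clusterMatched_self ζ hd⟩
  simpa using (hreorder hp hq hm).exists_perm_dist_le hd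

theorem hoelder_continuity_of_roots
    (n : ℕ) (hn : 1 ≤ n) (C : ℝ) (hC : 1 < C)
    (a b : Fin n → ℂ)
    (ha : ∀ i, ‖a i‖ ≤ C) (hb : ∀ i, ‖b i‖ ≤ C)
    (ζa ζb : Fin n → ℂ)
    (hPa : ∀ t : ℂ, t ^ n + ∑ i : Fin n, a i * t ^ (n - 1 - (i : ℕ)) =
      ∏ j : Fin n, (t - ζa j))
    (hPb : ∀ t : ℂ, t ^ n + ∑ i : Fin n, b i * t ^ (n - 1 - (i : ℕ)) =
      ∏ j : Fin n, (t - ζb j)) :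
    ∃ σ : Equiv.Perm (Fin n), ∀ j : Fin n,
      ‖ζa j - ζb (σ j)‖ ≤
        4 * n * C *
          (Finset.univ.sup' (Finset.univ_nonempty_iff.mpr ⟨⟨0, hn⟩⟩)
            (fun i => ‖a i - b i‖)) ^ ((1:ℝ) / n) := by
  set ε := Finset.univ.sup' (Finset.univ_nonempty_iff.mpr ⟨⟨0, hn⟩⟩) fun i => ‖a i - b i‖
  let c (s : unitInterval) (i : Fin n) : ℂ := a i + (s : ℝ) • (b i - a i)
  have hc0 : c 0 = a := funext fun i => by simp [c]
  have hc1 : c 1 = b := funext fun i => by simp [c]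
  have hcoeff (s : unitInterval) (i : Fin n) : ‖c s i‖ ≤ C := by
    simpa [c] using (convex_closedBall (0 : ℂ) C).add_smul_sub_mem (by simpa using ha i)
      (by simpa using hb i) s.2
  have hdiff (s : unitInterval) (i : Fin n) : ‖a i - c s i‖ ≤ ε := calc
    ‖a i - c s i‖ = (s : ℝ) * ‖a i - b i‖ := by
      simp [c, abs_of_nonneg s.2.1, norm_sub_rev]
    _ ≤ ‖a i - b i‖ := mul_le_of_le_one_left (norm_nonneg _) s.2.2
    _ ≤ ε := le_sup' (fun i => ‖a i - b i‖) (mem_univ i)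
  have hroot : 0 ≤ ε ^ ((1 : ℝ) / n) :=
    Real.rpow_nonneg ((norm_nonneg _).trans (le_sup' (fun i => ‖a i - b i‖) (mem_univ ⟨0, hn⟩))) _
  obtain ⟨σ, hσ⟩ := exists_perm_dist_le_of_continuous (c := c) (by fun_prop) (x₀ := 0) (x₁ := 1)
    (hc0 ▸ hPa) (hc1 ▸ hPb) (mul_nonneg (by linarith) hroot) fun s z hz =>
      IsRootTuple.exists_dist_le hPa (by omega) hC.le (hcoeff s) (hdiff s) hz
  refine ⟨σ, fun j => ?_⟩
  rw [← dist_eq_norm]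
  have : 0 ≤ C * ε ^ ((1 : ℝ) / n) := mul_nonneg (by linarith) hroot
  linarith [hσ j]
end

section
/- Let K ⊂ ℂ^m be compact, n ≥ 1, and let F(x,t) = t^n + a_1(x)t^(n−1) + ⋯ + a_n(x) and G(x,t) = t^n + b_1(x)t^(n−1) + ⋯ + b_n(x) with a_j, b_j : K → ℂ continuous. Suppose C > 1 satisfies max_j ‖a_j‖_K ≤ C and max_j ‖b_j‖_K ≤ C. Then for every x ∈ K, the Hausdorff distance between the zero sets {t : F(x,t)=0} and {t : G(x,t)=0} is at most 4nC·(max_j |a_j(x) − b_j(x)|)^(1/n). -/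
/-!
By Cauchy's bound every root `t` of `F(x, ·)` has `‖t‖ ≤ C + 1`, hence
`‖G(x, t)‖ = ‖G(x, t) - F(x, t)‖ ≤ n ε (C + 1) ^ (n - 1)` with `ε = maxⱼ ‖aⱼ(x) - bⱼ(x)‖`.
Over `ℂ` the monic `G(x, ·)` is the product of `X - s` over its roots `s`, so the root `s`
nearest to `t` satisfies `‖t - s‖ ^ n ≤ ‖G(x, t)‖ ≤ (4 n C) ^ n ε`. Exchanging `F` and `G`
bounds the Hausdorff distance.
-/

open Metric Set Finset Polynomial

section MonicOfCoeffs

variable {R : Type*} [Semiring R] {n : ℕ}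

noncomputable def monicOfCoeffs (u : Fin n → R) : R[X] :=
  X ^ n + ∑ j : Fin n, C (u j) * X ^ (n - 1 - (j : ℕ))

@[simp]
theorem eval_monicOfCoeffs (u : Fin n → R) (t : R) :
    (monicOfCoeffs u).eval t = t ^ n + ∑ j : Fin n, u j * t ^ (n - 1 - (j : ℕ)) := by
  simp [monicOfCoeffs, eval_finsetSum, eval_X_pow]

theorem setOf_isRoot_monicOfCoeffs (u : Fin n → R) :
    {t | (monicOfCoeffs u).IsRoot t} =
      {t | t ^ n + ∑ j : Fin n, u j * t ^ (n - 1 - (j : ℕ)) = 0} := by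
  ext t
  simp [IsRoot.def]

theorem degree_sum_C_mul_X_pow_lt [Nontrivial R] (u : Fin n → R) :
    (∑ j : Fin n, C (u j) * X ^ (n - 1 - (j : ℕ))).degree < (n : WithBot ℕ) := by
  refine (degree_sum_le _ _).trans_lt ((Finset.sup_lt_iff (WithBot.bot_lt_coe n)).2 fun j _ => ?_)
  exact (degree_C_mul_X_pow_le _ _).trans_lt (Nat.cast_lt.2 (by omega))

theorem monic_monicOfCoeffs [Nontrivial R] (u : Fin n → R) : (monicOfCoeffs u).Monic :=
  monic_X_pow_add (degree_sum_C_mul_X_pow_lt u)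

theorem natDegree_monicOfCoeffs [Nontrivial R] (u : Fin n → R) :
    (monicOfCoeffs u).natDegree = n := by
  rw [monicOfCoeffs, natDegree_add_eq_left_of_degree_lt (by
    rw [degree_X_pow]; exact degree_sum_C_mul_X_pow_lt u), natDegree_X_pow]

theorem coeff_monicOfCoeffs_of_lt (u : Fin n → R) {i : ℕ} (hi : i < n) :
    (monicOfCoeffs u).coeff i = u ⟨n - 1 - i, by omega⟩ := by
  simp only [monicOfCoeffs, coeff_add, coeff_X_pow, finsetSum_coeff, coeff_C_mul_X_pow,
    if_neg hi.ne, zero_add]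
  rw [Fintype.sum_eq_single ⟨n - 1 - i, by omega⟩ fun j hj => if_neg fun h => hj (Fin.ext (by
    have := j.isLt
    simp only
    omega))]
  exact if_pos (by simp only; omega)

end MonicOfCoeffs

namespace Polynomial

theorem Monic.exists_mem_roots_norm_sub_pow_le {K : Type*} [NormedField K] {p : K[X]}
    (hm : p.Monic) (hs : p.Splits) (hp : p.natDegree ≠ 0) (z : K) :
    ∃ r ∈ p.roots, ‖z - r‖ ^ p.natDegree ≤ ‖p.eval z‖ := by
  classical
  obtain ⟨r, hr, hmin⟩ := p.roots.toFinset.exists_min_image (fun r => ‖z - r‖₊)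
    (Multiset.toFinset_nonempty.mpr (hs.roots_ne_zero hp))
  refine ⟨r, Multiset.mem_toFinset.mp hr, ?_⟩
  have heval : ‖p.eval z‖₊ = (p.roots.map (‖z - ·‖₊)).prod := by
    conv_lhs => rw [hs.eq_prod_roots_of_monic hm]
    simp only [eval_multiset_prod, Multiset.map_map, Function.comp_def, eval_sub, eval_X, eval_C]
    exact (map_multiset_prod (nnnormHom : K →*₀ NNReal) _).trans (by simp [Multiset.map_map])
  have : ‖z - r‖₊ ^ p.natDegree ≤ ‖p.eval z‖₊ := by
    rw [heval, hs.natDegree_eq_card_roots, ← Multiset.card_map (‖z - ·‖₊)]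
    refine Multiset.pow_card_le_prod fun x hx => ?_
    obtain ⟨r', hr', rfl⟩ := Multiset.mem_map.mp hx
    exact hmin r' (Multiset.mem_toFinset.mpr hr')
  exact_mod_cast this

end Polynomial

section Roots

variable {K : Type*} [NormedField K] {n : ℕ}

theorem norm_le_of_isRoot_monicOfCoeffs {u : Fin n → K} {c : ℝ} (hc : 0 ≤ c)
    (hu : ∀ j, ‖u j‖ ≤ c) {t : K} (ht : (monicOfCoeffs u).IsRoot t) : ‖t‖ ≤ c + 1 := by
  have hbound : (cauchyBound (monicOfCoeffs u) : ℝ) ≤ c + 1 := by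
    rw [cauchyBound, (monic_monicOfCoeffs u).leadingCoeff, nnnorm_one, div_one,
      natDegree_monicOfCoeffs, NNReal.coe_add, NNReal.coe_one, ← Real.coe_toNNReal c hc]
    gcongr
    refine Finset.sup_le fun i hi => (Real.le_toNNReal_iff_coe_le hc).2 ?_
    rw [coeff_monicOfCoeffs_of_lt u (Finset.mem_range.1 hi), coe_nnnorm]
    exact hu _
  exact (NNReal.coe_lt_coe.2 (ht.norm_lt_cauchyBound (monic_monicOfCoeffs u).ne_zero)).le.trans
    hbound

theorem eval_monicOfCoeffs_sub (u v : Fin n → K) (t : K) :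
    (monicOfCoeffs v).eval t - (monicOfCoeffs u).eval t =
      ∑ j : Fin n, (v j - u j) * t ^ (n - 1 - (j : ℕ)) := by
  simp only [eval_monicOfCoeffs, sub_mul, Finset.sum_sub_distrib]
  ring

theorem norm_eval_monicOfCoeffs_sub_le {u v : Fin n → K} {ε r : ℝ} (huv : ∀ j, ‖u j - v j‖ ≤ ε)
    {t : K} (hr : 1 ≤ r) (ht : ‖t‖ ≤ r) :
    ‖(monicOfCoeffs v).eval t - (monicOfCoeffs u).eval t‖ ≤ n * ε * r ^ (n - 1) := by
  rw [eval_monicOfCoeffs_sub]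
  calc ‖∑ j : Fin n, (v j - u j) * t ^ (n - 1 - (j : ℕ))‖
      ≤ ∑ j : Fin n, ‖v j - u j‖ * ‖t‖ ^ (n - 1 - (j : ℕ)) :=
        (norm_sum_le _ _).trans_eq (by simp only [norm_mul, norm_pow])
    _ ≤ ∑ _j : Fin n, ε * r ^ (n - 1) := Finset.sum_le_sum fun j _ =>
        mul_le_mul ((norm_sub_rev _ _).trans_le (huv j))
          ((pow_le_pow_left₀ (norm_nonneg t) ht _).trans (pow_le_pow_right₀ hr (by omega)))
          (by positivity) ((norm_nonneg _).trans (huv j))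
    _ = n * ε * r ^ (n - 1) := by simp [mul_assoc]

end Roots

theorem le_mul_rpow_one_div_of_pow_le {d A ε : ℝ} {n : ℕ} (hn : n ≠ 0) (hd : 0 ≤ d) (hA : 0 ≤ A)
    (hε : 0 ≤ ε) (h : d ^ n ≤ A ^ n * ε) : d ≤ A * ε ^ ((1 : ℝ) / n) := by
  rwa [← pow_le_pow_iff_left₀ hd (by positivity) hn, mul_pow, one_div,
    Real.rpow_inv_natCast_pow hε hn]

theorem exists_isRoot_monicOfCoeffs_dist_le {K : Type*} [NormedField K] [IsAlgClosed K] {n : ℕ}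
    {u v : Fin n → K} {c ε : ℝ} (hn : n ≠ 0) (hc : 1 ≤ c) (hu : ∀ j, ‖u j‖ ≤ c)
    (huv : ∀ j, ‖u j - v j‖ ≤ ε) {t : K} (ht : (monicOfCoeffs u).IsRoot t) :
    ∃ s, (monicOfCoeffs v).IsRoot s ∧ dist t s ≤ 4 * n * c * ε ^ ((1 : ℝ) / n) := by
  obtain ⟨s, hs, hdist⟩ := (monic_monicOfCoeffs v).exists_mem_roots_norm_sub_pow_le
    (IsAlgClosed.splits _) ((natDegree_monicOfCoeffs v).trans_ne hn) t
  rw [natDegree_monicOfCoeffs] at hdist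
  refine ⟨s, isRoot_of_mem_roots hs, ?_⟩
  have hε : 0 ≤ ε := (norm_nonneg _).trans (huv ⟨0, Nat.pos_of_ne_zero hn⟩)
  have heval : ‖(monicOfCoeffs v).eval t‖ ≤ n * ε * (c + 1) ^ (n - 1) := by
    simpa [ht.eq_zero] using norm_eval_monicOfCoeffs_sub_le huv (by linarith)
      (norm_le_of_isRoot_monicOfCoeffs (by linarith) hu ht)
  have hn1 : (1 : ℝ) ≤ n := Nat.one_le_cast.2 (Nat.pos_of_ne_zero hn)
  have hconst : (n : ℝ) * (c + 1) ^ (n - 1) ≤ (4 * n * c) ^ n := by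
    rw [← mul_pow_sub_one hn]
    gcongr <;> nlinarith
  rw [dist_eq_norm]
  refine le_mul_rpow_one_div_of_pow_le hn (norm_nonneg _) (by positivity) hε ?_
  calc ‖t - s‖ ^ n ≤ n * ε * (c + 1) ^ (n - 1) := hdist.trans heval
    _ = n * (c + 1) ^ (n - 1) * ε := by ring
    _ ≤ (4 * n * c) ^ n * ε := by gcongr

theorem hausdorffDist_setOf_isRoot_monicOfCoeffs_le {K : Type*} [NormedField K] [IsAlgClosed K]
    {n : ℕ} {u v : Fin n → K} {c ε : ℝ} (hn : n ≠ 0) (hc : 1 ≤ c) (hu : ∀ j, ‖u j‖ ≤ c)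
    (hv : ∀ j, ‖v j‖ ≤ c) (huv : ∀ j, ‖u j - v j‖ ≤ ε) :
    hausdorffDist {t | (monicOfCoeffs u).IsRoot t} {t | (monicOfCoeffs v).IsRoot t} ≤
      4 * n * c * ε ^ ((1 : ℝ) / n) := by
  have hε : 0 ≤ ε := (norm_nonneg _).trans (huv ⟨0, Nat.pos_of_ne_zero hn⟩)
  refine hausdorffDist_le_of_mem_dist
    (mul_nonneg (mul_nonneg (by positivity) (by linarith)) (Real.rpow_nonneg hε _))
    (fun t ht => exists_isRoot_monicOfCoeffs_dist_le hn hc hu huv ht)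
    (fun t ht => exists_isRoot_monicOfCoeffs_dist_le hn hc hv
      (fun j => (norm_sub_rev _ _).trans_le (huv j)) ht)

theorem hausdorffDist_zero_sets_of_monic_general
    (m n : ℕ) (hn : 1 ≤ n) (K : Set (EuclideanSpace ℂ (Fin m)))
    (C : ℝ) (hC : 1 < C)
    (a b : Fin n → EuclideanSpace ℂ (Fin m) → ℂ)
    (haC : ∀ j, ∀ x ∈ K, ‖a j x‖ ≤ C)
    (hbC : ∀ j, ∀ x ∈ K, ‖b j x‖ ≤ C) :
    ∀ x ∈ K,
      hausdorffDist
        {t : ℂ | t ^ n + ∑ j : Fin n, a j x * t ^ (n - 1 - (j : ℕ)) = 0}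
        {t : ℂ | t ^ n + ∑ j : Fin n, b j x * t ^ (n - 1 - (j : ℕ)) = 0} ≤
      4 * n * C *
        (Finset.univ.sup' (Finset.univ_nonempty_iff.mpr ⟨⟨0, hn⟩⟩)
          (fun j : Fin n => ‖a j x - b j x‖)) ^ ((1:ℝ) / n) := by
  intro x hx
  simpa only [setOf_isRoot_monicOfCoeffs] using
    hausdorffDist_setOf_isRoot_monicOfCoeffs_le (u := (a · x)) (v := (b · x)) (by omega) hC.le
      (fun j => haC j x hx) (fun j => hbC j x hx)
      (fun j => Finset.le_sup' (fun j : Fin n => ‖a j x - b j x‖) (Finset.mem_univ j))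

theorem hausdorffDist_zero_sets_of_monic
    (m n : ℕ) (hn : 1 ≤ n) (K : Set (EuclideanSpace ℂ (Fin m)))
    (hK : IsCompact K) (hKne : K.Nonempty) (C : ℝ) (hC : 1 < C)
    (a b : Fin n → EuclideanSpace ℂ (Fin m) → ℂ)
    (ha : ∀ j, ContinuousOn (a j) K) (hb : ∀ j, ContinuousOn (b j) K)
    (haC : ∀ j, ∀ x ∈ K, ‖a j x‖ ≤ C)
    (hbC : ∀ j, ∀ x ∈ K, ‖b j x‖ ≤ C) :
    ∀ x ∈ K,
      hausdorffDist
        {t : ℂ | t ^ n + ∑ j : Fin n, a j x * t ^ (n - 1 - (j : ℕ)) = 0}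
        {t : ℂ | t ^ n + ∑ j : Fin n, b j x * t ^ (n - 1 - (j : ℕ)) = 0} ≤
      4 * n * C *
        (Finset.univ.sup' (Finset.univ_nonempty_iff.mpr ⟨⟨0, hn⟩⟩)
          (fun j : Fin n => ‖a j x - b j x‖)) ^ ((1:ℝ) / n) :=
  hausdorffDist_zero_sets_of_monic_general m n hn K C hC a b haC hbC
end
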